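/- Assume all users have the common deadline T, i.e. d u = T for every u. Define Λ(A) as the maximum cardinality of a set B ⊆ {1,…,T} such that for every t ∈ {1,…,T}, |B ∩ {1,…,t}| ≤ ∑_{s=1}^{t} A s. Then the maximum of |S| over all feasible sets S of users equals the largest k ∈ {0,1,…,U} such that the sum of the k smallest values of ν (counted with multiplicity) is at most Λ(A). (Optimality of ALG-SCSB₂ for RAED-SCSB with common deadlines.) -/

import Mathlib

/-- A schedule `σ : ℕ → Option (Fin U)` serves the user set `S`:
(i) the users appearing in slots `{1,…,T}` are exactly those of `S`;
(ii) each `u ∈ S` appears in exactly `ν u` slots;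
(iii) every slot at which a user `u` appears is at most `d u`;
(iv) for every `t ∈ {1,…,T}`, the number of busy slots in `{1,…,t}` is at most
`∑_{s=1}^{t} A s`. -/
def Serves (T U : ℕ) (ν d : Fin U → ℕ) (A : ℕ → ℕ)
    (σ : ℕ → Option (Fin U)) (S : Finset (Fin U)) : Prop :=
  (∀ u : Fin U, u ∈ S ↔ ∃ t ∈ Finset.Icc 1 T, σ t = some u) ∧
  (∀ u ∈ S, ((Finset.Icc 1 T).filter (fun t => σ t = some u)).card = ν u) ∧
  (∀ u : Fin U, ∀ t ∈ Finset.Icc 1 T, σ t = some u → t ≤ d u) ∧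
  (∀ t ∈ Finset.Icc 1 T,
    ((Finset.Icc 1 t).filter (fun s => σ s ≠ none)).card ≤ ∑ s ∈ Finset.Icc 1 t, A s)

/-- A user set is feasible if some schedule serves it. -/
def Feasible (T U : ℕ) (ν d : Fin U → ℕ) (A : ℕ → ℕ) (S : Finset (Fin U)) : Prop :=
  ∃ σ : ℕ → Option (Fin U), Serves T U ν d A σ S

open Finset

/-! With the common deadline `T` the deadlines impose nothing, so a set `S` of users is feasible
exactly when its total demand fits into an energy-admissible set of busy slots, i.e. when
`∑ u ∈ S, ν u ≤ Λ(A)`: the busy slots of a schedule form such a set, and conversely any admissible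
slot set of size `∑ u ∈ S, ν u` can be shared out among the users of `S` with the right
multiplicities. Among `k`-element sets of users, the `k` users with the smallest requirements have
the least total demand, so the largest feasible cardinality is the largest `k` whose `k` smallest
requirements sum to at most `Λ(A)`. -/

theorem Fin.val_le_of_strictMono {k n : ℕ} {f : Fin k → Fin n} (hf : StrictMono f) (j : Fin k) :
    (j : ℕ) ≤ f j :=
  calc (j : ℕ) = #((Iio j).map ⟨f, hf.injective⟩) := by simp
    _ ≤ #(Iio (f j)) := card_le_card <| by
      intro x
      simp only [mem_map, mem_Iio, Function.Embedding.coeFn_mk]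
      rintro ⟨i, hi, rfl⟩
      exact hf hi
    _ = f j := Fin.card_Iio _

theorem Fin.filter_val_lt_eq_map_castLEEmb {n k : ℕ} (hk : k ≤ n) :
    univ.filter (fun i : Fin n => (i : ℕ) < k) = univ.map (Fin.castLEEmb hk) := by
  ext i
  simp only [mem_filter, mem_univ, true_and, mem_map, Fin.castLEEmb_apply]
  exact ⟨fun hi => ⟨⟨i, hi⟩, rfl⟩, by rintro ⟨j, -, rfl⟩; exact j.isLt⟩

theorem Fin.sum_filter_val_lt_card_le_sum {M : Type*} [AddCommMonoid M] [PartialOrder M]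
    [IsOrderedAddMonoid M] {n : ℕ} {g : Fin n → M} (hg : Monotone g) (S : Finset (Fin n)) :
    ∑ i ∈ univ.filter (fun i : Fin n => (i : ℕ) < #S), g i ≤ ∑ i ∈ S, g i := by
  have hS : #S ≤ n := by simpa using card_le_univ S
  let f := S.orderEmbOfFin rfl
  calc ∑ i ∈ univ.filter (fun i : Fin n => (i : ℕ) < #S), g i
        = ∑ j : Fin #S, g (Fin.castLE hS j) := by
        rw [Fin.filter_val_lt_eq_map_castLEEmb hS, sum_map]; rfl
    _ ≤ ∑ j : Fin #S, g (f j) :=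
        sum_le_sum fun j _ => hg (Fin.val_le_of_strictMono f.strictMono j)
    _ = ∑ i ∈ S, g i := by
        conv_rhs => rw [← S.map_orderEmbOfFin_univ rfl, sum_map]
        rfl

theorem Finset.exists_option_fiber_card_eq {α β : Type*} [DecidableEq α] [DecidableEq β]
    (n : β → ℕ) (S : Finset β) (s : Finset α) (hs : #s = ∑ u ∈ S, n u) :
    ∃ σ : α → Option β,
      (∀ x u, σ x = some u → x ∈ s ∧ u ∈ S) ∧ ∀ u ∈ S, #{x ∈ s | σ x = some u} = n u := by
  induction S using Finset.induction_on generalizing s with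
  | empty => exact ⟨fun _ => none, by simp, by simp⟩
  | @insert a S ha ih =>
    rw [sum_insert ha] at hs
    -- `a` takes any `n a` elements of `s`; the rest is shared out among `S` inductively.
    obtain ⟨s₁, hs₁, hcard₁⟩ := exists_subset_card_eq (show n a ≤ #s by omega)
    obtain ⟨σ, hσ, hfiber⟩ := ih (s \ s₁) (by rw [card_sdiff_of_subset hs₁]; omega)
    refine ⟨fun x => if x ∈ s₁ then some a else σ x, ?_, ?_⟩
    · intro x u hx
      simp only at hx
      split_ifs at hx <;> grind
    · intro u hu
      rcases mem_insert.mp hu with rfl | hu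
      · convert hcard₁ using 2
        ext x
        have hσx : σ x ≠ some u := fun h => ha (hσ x u h).2
        grind
      · rw [← hfiber u hu]
        congr 1
        ext x
        have hua : u ≠ a := fun h => ha (h ▸ hu)
        grind

/-- The numbers of busy slots that the energy arrivals `A` allow; `Λ(A)` is its maximum. -/
def busySlotCounts (T : ℕ) (A : ℕ → ℕ) : Set ℕ :=
  {n : ℕ | ∃ B ⊆ Finset.Icc 1 T, B.card = n ∧
    ∀ t ∈ Finset.Icc 1 T, (B ∩ Finset.Icc 1 t).card ≤ ∑ s ∈ Finset.Icc 1 t, A s}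

section Schedule

variable {T U : ℕ} {ν d : Fin U → ℕ} {A : ℕ → ℕ} {σ : ℕ → Option (Fin U)} {S : Finset (Fin U)}

theorem Serves.card_busy_eq_sum (h : Serves T U ν d A σ S) :
    #{t ∈ Icc 1 T | σ t ≠ none} = ∑ u ∈ S, ν u := by
  obtain ⟨hS, hcount, -, -⟩ := h
  rw [card_eq_sum_card_fiberwise (f := σ) (t := S.map ⟨some, Option.some_injective _⟩)]
  · rw [sum_map]
    refine sum_congr rfl fun u hu => ?_
    rw [← hcount u hu, filter_filter]
    congr 1
    ext t
    simp +contextual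
  · intro t ht
    rw [mem_coe, mem_filter] at ht
    obtain ⟨u, hu⟩ := Option.ne_none_iff_exists'.mp ht.2
    simpa [hu] using (hS u).mpr ⟨t, ht.1, hu⟩

theorem Serves.card_busy_mem_busySlotCounts (h : Serves T U ν d A σ S) :
    #{t ∈ Icc 1 T | σ t ≠ none} ∈ busySlotCounts T A := by
  refine ⟨_, filter_subset _ _, rfl, fun t ht => ?_⟩
  convert h.2.2.2 t ht using 2
  ext s
  simp only [mem_inter, mem_filter, mem_Icc] at ht ⊢
  grind

theorem Feasible.sum_le {Λ : ℕ} (hΛ : Λ ∈ upperBounds (busySlotCounts T A))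
    (h : Feasible T U ν d A S) : ∑ u ∈ S, ν u ≤ Λ := by
  obtain ⟨σ, hσ⟩ := h
  exact hσ.card_busy_eq_sum ▸ hΛ hσ.card_busy_mem_busySlotCounts

theorem feasible_of_sum_le {Λ : ℕ} (hν : ∀ u ∈ S, 0 < ν u) (hd : ∀ u ∈ S, T ≤ d u)
    (hΛ : Λ ∈ busySlotCounts T A) (hS : ∑ u ∈ S, ν u ≤ Λ) : Feasible T U ν d A S := by
  obtain ⟨B, hBT, rfl, hB⟩ := hΛ
  obtain ⟨B', hB'B, hB'⟩ := exists_subset_card_eq hS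
  obtain ⟨σ, hσ, hfiber⟩ := exists_option_fiber_card_eq ν S B' hB'
  have hfilter : ∀ u, {t ∈ Icc 1 T | σ t = some u} = {t ∈ B' | σ t = some u} := fun u => by
    ext t
    have htT := fun h => hB'B.trans hBT (hσ t u h).1
    grind
  refine ⟨σ, fun u => ⟨fun hu => ?_, ?_⟩, fun u hu => ?_, fun u t ht htu => ?_, fun t ht => ?_⟩
  · obtain ⟨t, ht⟩ := card_pos.mp ((hfiber u hu).symm ▸ hν u hu)
    rw [← hfilter, mem_filter] at ht
    exact ⟨t, ht⟩
  · rintro ⟨t, -, htu⟩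
    exact (hσ t u htu).2
  · rw [hfilter, hfiber u hu]
  · exact (mem_Icc.mp ht).2.trans (hd u (hσ t u htu).2)
  · refine (card_le_card fun s hs => ?_).trans (hB t ht)
    rw [mem_filter] at hs
    obtain ⟨u, hu⟩ := Option.ne_none_iff_exists'.mp hs.2
    exact mem_inter.mpr ⟨hB'B (hσ s u hu).1, hs.1⟩

end Schedule

theorem exists_card_eq_sum_le_iff {M : Type*} [AddCommMonoid M] [PartialOrder M]
    [IsOrderedAddMonoid M] {U : ℕ} {ν : Fin U → M} {e : Equiv.Perm (Fin U)}
    (he : Monotone (ν ∘ e)) (Λ : M) (k : ℕ) :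
    (∃ S : Finset (Fin U), ∑ u ∈ S, ν u ≤ Λ ∧ #S = k) ↔
      k ≤ U ∧ ∑ i ∈ univ.filter (fun i : Fin U => (i : ℕ) < k), ν (e i) ≤ Λ := by
  constructor
  · rintro ⟨S, hS, rfl⟩
    refine ⟨by simpa using card_le_univ S, le_trans ?_ hS⟩
    calc ∑ i ∈ univ.filter (fun i : Fin U => (i : ℕ) < #S), ν (e i)
        = ∑ i ∈ univ.filter (fun i : Fin U => (i : ℕ) < #(S.map e.symm.toEmbedding)),
            (ν ∘ e) i := by rw [card_map]; rfl
      _ ≤ ∑ i ∈ S.map e.symm.toEmbedding, (ν ∘ e) i := Fin.sum_filter_val_lt_card_le_sum he _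
      _ = ∑ u ∈ S, ν u := by simp [sum_map]
  · rintro ⟨hk, hsum⟩
    refine ⟨(univ.filter fun i : Fin U => (i : ℕ) < k).map e.toEmbedding, by rwa [sum_map], ?_⟩
    rw [card_map, Fin.card_filter_val_lt, min_eq_right hk]

/-- Optimality of ALG-SCSB₂ for common deadlines: the maximum number of served users
equals the largest `k ∈ {0,…,U}` such that the sum of the `k` smallest processing
requirements is at most the maximum cumulative capacity `Λ(A)` (`e` sorts `ν` in
nondecreasing order). -/
theorem stmt7 (T U : ℕ) (ν d : Fin U → ℕ) (A : ℕ → ℕ)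
    (hν : ∀ i, 1 ≤ ν i) (hd : ∀ u, d u = T)
    (Λ : ℕ)
    (hΛ : IsGreatest {n : ℕ | ∃ B ⊆ Finset.Icc 1 T, B.card = n ∧
      ∀ t ∈ Finset.Icc 1 T, (B ∩ Finset.Icc 1 t).card ≤ ∑ s ∈ Finset.Icc 1 t, A s} Λ)
    (e : Equiv.Perm (Fin U)) (he : Monotone (ν ∘ e)) :
    ∃ m : ℕ,
      IsGreatest {n : ℕ | ∃ S : Finset (Fin U), Feasible T U ν d A S ∧ S.card = n} m ∧
      IsGreatest {k : ℕ | k ≤ U ∧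
        (∑ i ∈ Finset.univ.filter (fun i : Fin U => (i : ℕ) < k), ν (e i)) ≤ Λ} m := by
  have hfeasible (S : Finset (Fin U)) : Feasible T U ν d A S ↔ ∑ u ∈ S, ν u ≤ Λ :=
    ⟨Feasible.sum_le hΛ.2, feasible_of_sum_le (fun u _ => hν u) (fun u _ => (hd u).ge) hΛ.1⟩
  obtain ⟨m, hm⟩ : ∃ m, IsGreatest {k : ℕ | k ≤ U ∧
      (∑ i ∈ Finset.univ.filter (fun i : Fin U => (i : ℕ) < k), ν (e i)) ≤ Λ} m :=
    BddAbove.exists_isGreatest_of_nonempty ⟨U, fun k hk => hk.1⟩ ⟨0, Nat.zero_le U, by simp⟩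
  refine ⟨m, ?_, hm⟩
  convert hm using 1
  ext k
  simp only [Set.mem_ofPred_eq, hfeasible]
  exact exists_card_eq_sum_le_iff he Λ k
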